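/- Let (a_n) and (b_n) be positive sequences converging to zero such that Σ a_n = +∞ and Σ a_n b_n = +∞. Then there exists a sequence (c_n) with c_n ∈ {0, a_n} for every n, such that Σ c_n = +∞ and Σ c_n b_n < +∞. -/
import Mathlib
open Finset Filter

lemma key3 (a b : ℕ → ℝ) (ha : ∀ n, 0 < a n)
    (ha0 : Filter.Tendsto a Filter.atTop (nhds 0))
    (hb0 : Filter.Tendsto b Filter.atTop (nhds 0))
    (hadiv : ¬ Summable a) (m k : ℕ) :
    ∃ p : ℕ × ℕ, m ≤ p.1 ∧ k ≤ p.1 ∧ p.1 < p.2 ∧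
      (∀ n, p.1 ≤ n → b n ≤ (1/2 : ℝ)^k) ∧
      1 < ∑ n ∈ Finset.Ico p.1 p.2, a n ∧ ∑ n ∈ Finset.Ico p.1 p.2, a n ≤ 2 := by
  -- find threshold s
  have hbk : ∀ᶠ n in atTop, b n ≤ (1/2 : ℝ)^k := by
    have := hb0.eventually (ge_mem_nhds (show (0:ℝ) < (1/2)^k by positivity))
    filter_upwards [this] with n hn using hn
  have hak : ∀ᶠ n in atTop, a n ≤ 1 := by
    have := ha0.eventually (ge_mem_nhds (show (0:ℝ) < 1 by norm_num))
    filter_upwards [this] with n hn using hn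
  obtain ⟨N1, hN1⟩ := hbk.exists_forall_of_atTop
  obtain ⟨N2, hN2⟩ := hak.exists_forall_of_atTop
  set s := max (max N1 N2) (max m k) with hs
  have hsN1 : N1 ≤ s := le_trans (le_max_left _ _) (le_max_left _ _)
  have hsN2 : N2 ≤ s := le_trans (le_max_right _ _) (le_max_left _ _)
  have hsm : m ≤ s := le_trans (le_max_left _ _) (le_max_right _ _)
  have hsk : k ≤ s := le_trans (le_max_right _ _) (le_max_right _ _)
  -- tail divergence
  have htail : ¬ Summable (fun n => a (n + s)) := fun h => hadiv ((summable_nat_add_iff s).mp h)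
  have htend := (not_summable_iff_tendsto_nat_atTop_of_nonneg
    (fun n => (ha (n + s)).le)).mp htail
  obtain ⟨L, hL⟩ := (htend.eventually_gt_atTop 1).exists
  have hEx : ∃ t, 1 < ∑ n ∈ Finset.Ico s t, a n := by
    refine ⟨s + L, ?_⟩
    rw [Finset.sum_Ico_eq_sum_range]
    simpa [add_comm, Nat.add_sub_cancel_left] using hL
  classical
  set t := Nat.find hEx with ht
  have h1 : 1 < ∑ n ∈ Finset.Ico s t, a n := Nat.find_spec hEx
  have hst : s < t := by
    by_contra h
    push_neg at h
    rw [Finset.Ico_eq_empty (by omega)] at h1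
    norm_num at h1
  refine ⟨⟨s, t⟩, hsm, hsk, hst, fun n hn => hN1 n (le_trans hsN1 hn), h1, ?_⟩
  have hmin : ¬ (1 < ∑ n ∈ Finset.Ico s (t-1), a n) := Nat.find_min hEx (by omega)
  push_neg at hmin
  have hsplit : ∑ n ∈ Finset.Ico s t, a n
      = (∑ n ∈ Finset.Ico s (t-1), a n) + a (t-1) := by
    have : t - 1 + 1 = t := by omega
    rw [← this, Finset.sum_Ico_succ_top (by omega)]
    simp
  rw [hsplit]
  have : a (t-1) ≤ 1 := hN2 _ (by omega)
  linarith

noncomputable def blocks3 (a b : ℕ → ℝ) (ha : ∀ n, 0 < a n)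
    (ha0 : Filter.Tendsto a Filter.atTop (nhds 0))
    (hb0 : Filter.Tendsto b Filter.atTop (nhds 0))
    (hadiv : ¬ Summable a) : ℕ → ℕ × ℕ
  | 0 => Classical.choose (key3 a b ha ha0 hb0 hadiv 0 0)
  | k+1 => Classical.choose (key3 a b ha ha0 hb0 hadiv
      (blocks3 a b ha ha0 hb0 hadiv k).2 (k+1))

lemma blocks3_spec (a b : ℕ → ℝ) (ha : ∀ n, 0 < a n)
    (ha0 : Filter.Tendsto a Filter.atTop (nhds 0))
    (hb0 : Filter.Tendsto b Filter.atTop (nhds 0))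
    (hadiv : ¬ Summable a) (k : ℕ) :
    k ≤ (blocks3 a b ha ha0 hb0 hadiv k).1 ∧
    (blocks3 a b ha ha0 hb0 hadiv k).1 < (blocks3 a b ha ha0 hb0 hadiv k).2 ∧
    (∀ n, (blocks3 a b ha ha0 hb0 hadiv k).1 ≤ n → b n ≤ (1/2 : ℝ)^k) ∧
    1 < ∑ n ∈ Finset.Ico (blocks3 a b ha ha0 hb0 hadiv k).1
        (blocks3 a b ha ha0 hb0 hadiv k).2, a n ∧
    ∑ n ∈ Finset.Ico (blocks3 a b ha ha0 hb0 hadiv k).1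
        (blocks3 a b ha ha0 hb0 hadiv k).2, a n ≤ 2 := by
  cases k with
  | zero =>
    have h := Classical.choose_spec (key3 a b ha ha0 hb0 hadiv 0 0)
    rw [blocks3]
    exact ⟨h.2.1, h.2.2.1, h.2.2.2.1, h.2.2.2.2⟩
  | succ k =>
    have h := Classical.choose_spec (key3 a b ha ha0 hb0 hadiv
      (blocks3 a b ha ha0 hb0 hadiv k).2 (k+1))
    rw [blocks3]
    exact ⟨h.2.1, h.2.2.1, h.2.2.2.1, h.2.2.2.2⟩

lemma blocks3_chain (a b : ℕ → ℝ) (ha : ∀ n, 0 < a n)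
    (ha0 : Filter.Tendsto a Filter.atTop (nhds 0))
    (hb0 : Filter.Tendsto b Filter.atTop (nhds 0))
    (hadiv : ¬ Summable a) (k : ℕ) :
    (blocks3 a b ha ha0 hb0 hadiv k).2 ≤ (blocks3 a b ha ha0 hb0 hadiv (k+1)).1 := by
  have h := Classical.choose_spec (key3 a b ha ha0 hb0 hadiv
    (blocks3 a b ha ha0 hb0 hadiv k).2 (k+1))
  rw [blocks3]
  exact h.1

lemma blocks3_mono (a b : ℕ → ℝ) (ha : ∀ n, 0 < a n)
    (ha0 : Filter.Tendsto a Filter.atTop (nhds 0))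
    (hb0 : Filter.Tendsto b Filter.atTop (nhds 0))
    (hadiv : ¬ Summable a) {j k : ℕ} (h : j < k) :
    (blocks3 a b ha ha0 hb0 hadiv j).2 ≤ (blocks3 a b ha ha0 hb0 hadiv k).1 := by
  induction k with
  | zero => omega
  | succ k ih =>
    rcases Nat.lt_succ_iff_lt_or_eq.mp h with h' | h'
    · calc (blocks3 a b ha ha0 hb0 hadiv j).2 ≤ (blocks3 a b ha ha0 hb0 hadiv k).1 := ih h'
        _ ≤ (blocks3 a b ha ha0 hb0 hadiv k).2 :=
            (blocks3_spec a b ha ha0 hb0 hadiv k).2.1.le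
        _ ≤ _ := blocks3_chain a b ha ha0 hb0 hadiv k
    · subst h'; exact blocks3_chain a b ha ha0 hb0 hadiv j

/-- Let `(a n)` and `(b n)` be positive sequences tending to `0` with `Σ a n = +∞` and
`Σ a n * b n = +∞`. Then there is `(c n)` with `c n ∈ {0, a n}` such that `Σ c n = +∞`
and `Σ c n * b n < +∞`. -/
theorem stmt3 (a b : ℕ → ℝ) (ha : ∀ n, 0 < a n) (hb : ∀ n, 0 < b n)
    (ha0 : Filter.Tendsto a Filter.atTop (nhds 0))
    (hb0 : Filter.Tendsto b Filter.atTop (nhds 0))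
    (hadiv : ¬ Summable a) (hdiv : ¬ Summable (fun n => a n * b n)) :
    ∃ c : ℕ → ℝ, (∀ n, c n = a n ∨ c n = 0) ∧
      (¬ Summable c) ∧ Summable (fun n => c n * b n) := by
  classical
  set B := blocks3 a b ha ha0 hb0 hadiv with hB
  set F : ℕ → Finset ℕ := fun k => Finset.Ico (B k).1 (B k).2 with hF
  have hspec : ∀ k, k ≤ (B k).1 ∧ (B k).1 < (B k).2 ∧
      (∀ n, (B k).1 ≤ n → b n ≤ (1/2 : ℝ)^k) ∧
      1 < ∑ n ∈ Finset.Ico (B k).1 (B k).2, a n ∧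
      ∑ n ∈ Finset.Ico (B k).1 (B k).2, a n ≤ 2 :=
    blocks3_spec a b ha ha0 hb0 hadiv
  have hmono : ∀ {j k : ℕ}, j < k → (B j).2 ≤ (B k).1 :=
    fun h => blocks3_mono a b ha ha0 hb0 hadiv h
  -- disjointness
  have hdisj : ∀ j k, j ≠ k → Disjoint (F j) (F k) := by
    intro j k hjk
    rw [Finset.disjoint_left]
    intro n hnj hnk
    simp only [hF, Finset.mem_Ico] at hnj hnk
    rcases Nat.lt_or_ge j k with h | h
    · have := hmono h; omega
    · have : k < j := by omega
      have := hmono this; omega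
  set c : ℕ → ℝ := fun n => if ∃ k, n ∈ F k then a n else 0 with hc
  have hc0 : ∀ n, 0 ≤ c n := by
    intro n; rw [hc]; dsimp only; split
    · exact (ha n).le
    · exact le_refl 0
  refine ⟨c, ?_, ?_, ?_⟩
  · intro n; rw [hc]; dsimp only; split
    · exact Or.inl rfl
    · exact Or.inr rfl
  · -- not summable
    intro hsum
    obtain ⟨K, hK⟩ := exists_nat_gt (∑' n, c n)
    have hTle : ∑ n ∈ (Finset.range K).biUnion F, c n ≤ ∑' n, c n :=
      Summable.sum_le_tsum _ (fun n _ => hc0 n) hsum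
    have hTeq : ∑ n ∈ (Finset.range K).biUnion F, c n
        = ∑ k ∈ Finset.range K, ∑ n ∈ F k, c n := by
      refine Finset.sum_biUnion ?_
      intro j _ k _ hjk
      exact hdisj j k hjk
    have hge : (K : ℝ) ≤ ∑ k ∈ Finset.range K, ∑ n ∈ F k, c n := by
      calc (K : ℝ) = ∑ _k ∈ Finset.range K, (1:ℝ) := by simp
        _ ≤ _ := by
          refine Finset.sum_le_sum ?_
          intro k _
          have : ∑ n ∈ F k, c n = ∑ n ∈ F k, a n := by
            refine Finset.sum_congr rfl ?_
            intro n hn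
            rw [hc]; dsimp only
            rw [if_pos ⟨k, hn⟩]
          rw [this]
          exact ((hspec k).2.2.2.1).le
    rw [hTeq] at hTle
    linarith
  · -- summable c * b
    refine summable_of_sum_range_le (c := 4) (fun n => mul_nonneg (hc0 n) (hb n).le) ?_
    intro N
    have hrw : ∑ n ∈ Finset.range N, c n * b n
        = ∑ n ∈ (Finset.range N).filter (fun n => ∃ k, n ∈ F k), a n * b n := by
      rw [Finset.sum_filter]
      refine Finset.sum_congr rfl ?_
      intro n _
      rw [hc]; dsimp only
      split <;> simp
    rw [hrw]
    have hsub : (Finset.range N).filter (fun n => ∃ k, n ∈ F k)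
        ⊆ (Finset.range N).biUnion F := by
      intro n hn
      simp only [Finset.mem_filter, Finset.mem_range] at hn
      obtain ⟨hnN, k, hk⟩ := hn
      refine Finset.mem_biUnion.mpr ⟨k, ?_, hk⟩
      have h1 : k ≤ (B k).1 := (hspec k).1
      have h2 : (B k).1 ≤ n := (Finset.mem_Ico.mp hk).1
      exact Finset.mem_range.mpr (by omega)
    calc ∑ n ∈ (Finset.range N).filter (fun n => ∃ k, n ∈ F k), a n * b n
        ≤ ∑ n ∈ (Finset.range N).biUnion F, a n * b n :=
          Finset.sum_le_sum_of_subset_of_nonneg hsub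
            (fun n _ _ => mul_nonneg (ha n).le (hb n).le)
      _ = ∑ k ∈ Finset.range N, ∑ n ∈ F k, a n * b n :=
          Finset.sum_biUnion (fun j _ k _ hjk => hdisj j k hjk)
      _ ≤ ∑ k ∈ Finset.range N, 2 * (1/2 : ℝ)^k := by
          refine Finset.sum_le_sum ?_
          intro k _
          calc ∑ n ∈ F k, a n * b n ≤ ∑ n ∈ F k, a n * (1/2:ℝ)^k := by
                refine Finset.sum_le_sum ?_
                intro n hn
                have hbn : b n ≤ (1/2:ℝ)^k :=
                  (hspec k).2.2.1 n (Finset.mem_Ico.mp hn).1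
                exact mul_le_mul_of_nonneg_left hbn (ha n).le
            _ = (∑ n ∈ F k, a n) * (1/2:ℝ)^k := by rw [Finset.sum_mul]
            _ ≤ 2 * (1/2:ℝ)^k := by
                have := (hspec k).2.2.2.2
                have hp : (0:ℝ) ≤ (1/2:ℝ)^k := by positivity
                nlinarith
      _ = 2 * ∑ k ∈ Finset.range N, (1/2 : ℝ)^k := by rw [Finset.mul_sum]
      _ ≤ 2 * 2 := by
          have := sum_geometric_two_le N
          linarith
      _ = 4 := by norm_num
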